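/- arXiv:1608.04024 — 12 statements merged into one kernel-verified Lean document; each statement's English description precedes it below -/
import Mathlib

section
/- Let f and g be bivariate real-valued functions f(s,t), g(s,t) defined for natural numbers 0 ≤ s ≤ t with f(t,t) = 0 and g(t,t) = 0 for all t. If f and g are both super-additive, then their min-plus convolution h = f ⊗ g is super-additive, i.e., h(s,u) ≥ h(s,t) + h(t,u) for all s ≤ t ≤ u. -/
/-- Min-plus convolution of bivariate functions:
`(f ⊗ g)(s,u) = min over t in [s,u] of { f(s,t) + g(t,u) }`. -/
noncomputable def minplus (f g : ℕ → ℕ → ℝ) : ℕ → ℕ → ℝ :=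
  fun s u => sInf ((fun t => f s t + g t u) '' Set.Icc s u)

/-- A bivariate function is super-additive if `f(s,u) ≥ f(s,t) + f(t,u)` for all `s ≤ t ≤ u`. -/
def SuperAdditiveBiv (f : ℕ → ℕ → ℝ) : Prop :=
  ∀ s t u : ℕ, s ≤ t → t ≤ u → f s t + f t u ≤ f s u

lemma minplus_le (f g : ℕ → ℕ → ℝ) {s u r : ℕ} (h1 : s ≤ r) (h2 : r ≤ u) :
    minplus f g s u ≤ f s r + g r u := by
  apply csInf_le
  · exact ((Set.finite_Icc s u).image _).bddBelow
  · exact ⟨r, ⟨h1, h2⟩, rfl⟩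

/-- Lemma 1(i): if `f` and `g` are super-additive bivariate functions vanishing on the
diagonal, then their min-plus convolution `h = f ⊗ g` is super-additive. -/
theorem minplus_superadditive (f g : ℕ → ℕ → ℝ)
    (hf0 : ∀ t, f t t = 0) (hg0 : ∀ t, g t t = 0)
    (hf : SuperAdditiveBiv f) (hg : SuperAdditiveBiv g) :
    SuperAdditiveBiv (minplus f g) := by
  intro s t u hst htu
  have hmem : minplus f g s u ∈ (fun r => f s r + g r u) '' Set.Icc s u := by
    apply Set.Nonempty.csInf_mem
    · exact ⟨f s s + g s u, s, ⟨le_refl s, hst.trans htu⟩, rfl⟩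
    · exact (Set.finite_Icc s u).image _
  obtain ⟨r, ⟨hsr, hru⟩, hr⟩ := hmem
  rcases le_total r t with hrt | htr
  · have h1 : minplus f g s t ≤ f s r + g r t := minplus_le f g hsr hrt
    have h2 : minplus f g t u ≤ g t u := by
      have := minplus_le f g (le_refl t) htu
      rwa [hf0, zero_add] at this
    have h3 : g r t + g t u ≤ g r u := hg r t u hrt htu
    simp only [] at hr; linarith
  · have h1 : minplus f g t u ≤ f t r + g r u := minplus_le f g htr hru
    have h2 : minplus f g s t ≤ f s t := by
      have := minplus_le f g hst (le_refl t)
      rwa [hg0, add_zero] at this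
    have h3 : f s t + f t r ≤ f s r := hf s t r hst htr
    simp only [] at hr; linarith
end

section
/- Let f and g be univariate additive functions, i.e., bivariate functions of the form f(s,t) = F(t−s) and g(s,t) = G(t−s) with F(a+b) = F(a) + F(b) and G(a+b) = G(a) + G(b) for all natural numbers a, b (so F(0) = G(0) = 0). Then h = f ⊗ g is additive: h(s,u) = h(s,t) + h(t,u) for all s ≤ t ≤ u; moreover h is univariate, depending only on u − s. -/
private lemma additive_linear (F : ℕ → ℝ) (hF : ∀ a b : ℕ, F (a + b) = F a + F b) :
    ∀ k : ℕ, F k = k * F 1 := by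
  have h0 : F 0 = 0 := by have := hF 0 0; simp at this; linarith
  intro k
  induction k with
  | zero => simpa using h0
  | succ n ih => rw [hF n 1, ih]; push_cast; ring

private lemma minplus_eq (F G : ℕ → ℝ)
    (hF : ∀ a b : ℕ, F (a + b) = F a + F b)
    (hG : ∀ a b : ℕ, G (a + b) = G a + G b)
    {s u : ℕ} (hsu : s ≤ u) :
    minplus (fun s t => F (t - s)) (fun s t => G (t - s)) s u
      = (u - s : ℕ) * min (F 1) (G 1) := by
  have hFl := additive_linear F hF
  have hGl := additive_linear G hG
  have hF0 : F 0 = 0 := by simpa using hFl 0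
  have hG0 : G 0 = 0 := by simpa using hGl 0
  unfold minplus
  apply le_antisymm
  · rcases le_total (F 1) (G 1) with h | h
    · have : F (u - s) + G (u - u) = (u - s : ℕ) * min (F 1) (G 1) := by
        rw [hFl, Nat.sub_self, hG0, min_eq_left h]; ring
      calc sInf _ ≤ F (u - s) + G (u - u) :=
            csInf_le (((Set.finite_Icc s u).image _).bddBelow)
              ⟨u, Set.mem_Icc.2 ⟨hsu, le_refl u⟩, rfl⟩
        _ = _ := this
    · have : F (s - s) + G (u - s) = (u - s : ℕ) * min (F 1) (G 1) := by
        rw [hGl, Nat.sub_self, hF0, min_eq_right h]; ring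
      calc sInf _ ≤ F (s - s) + G (u - s) :=
            csInf_le (((Set.finite_Icc s u).image _).bddBelow)
              ⟨s, Set.mem_Icc.2 ⟨le_refl s, hsu⟩, rfl⟩
        _ = _ := this
  · have hne : ((fun t => F (t - s) + G (u - t)) '' Set.Icc s u).Nonempty :=
      ⟨_, ⟨s, Set.mem_Icc.2 ⟨le_refl s, hsu⟩, rfl⟩⟩
    apply le_csInf hne
    rintro x ⟨t, ht, rfl⟩
    obtain ⟨hst, htu⟩ := Set.mem_Icc.1 ht
    have hsum : (t - s) + (u - t) = u - s := by omega
    simp only []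
    rw [hFl (t - s), hGl (u - t), ← hsum]
    push_cast
    have h1 : (t - s : ℕ) * min (F 1) (G 1) ≤ (t - s : ℕ) * F 1 :=
      mul_le_mul_of_nonneg_left (min_le_left _ _) (by positivity)
    have h2 : (u - t : ℕ) * min (F 1) (G 1) ≤ (u - t : ℕ) * G 1 :=
      mul_le_mul_of_nonneg_left (min_le_right _ _) (by positivity)
    nlinarith

/-- Lemma 1(ii): if `f(s,t) = F(t-s)` and `g(s,t) = G(t-s)` are univariate additive
functions (`F(a+b) = F(a)+F(b)`, `G(a+b) = G(a)+G(b)`), then `h = f ⊗ g` is additive,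
i.e. `h(s,u) = h(s,t) + h(t,u)` for all `s ≤ t ≤ u`, and moreover `h` is univariate,
depending only on `u - s`. -/
theorem minplus_additive_of_univariate (F G : ℕ → ℝ)
    (hF : ∀ a b : ℕ, F (a + b) = F a + F b)
    (hG : ∀ a b : ℕ, G (a + b) = G a + G b) :
    (∀ s t u : ℕ, s ≤ t → t ≤ u →
      minplus (fun s t => F (t - s)) (fun s t => G (t - s)) s u
        = minplus (fun s t => F (t - s)) (fun s t => G (t - s)) s t
          + minplus (fun s t => F (t - s)) (fun s t => G (t - s)) t u) ∧
    (∃ H : ℕ → ℝ, ∀ s t : ℕ, s ≤ t →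
      minplus (fun s t => F (t - s)) (fun s t => G (t - s)) s t = H (t - s)) := by
  constructor
  · intro s t u hst htu
    rw [minplus_eq F G hF hG (hst.trans htu), minplus_eq F G hF hG hst,
      minplus_eq F G hF hG htu]
    have : (u - s : ℕ) = (t - s) + (u - t) := by omega
    rw [this]; push_cast; ring
  · exact ⟨fun n => n * min (F 1) (G 1), fun s t hst => minplus_eq F G hF hG hst⟩
end

section
/- Define the bivariate functions f(s,t) = t − s and g(s,t) = 2(⌊t/2⌋ − ⌊s/2⌋) for natural numbers 0 ≤ s ≤ t. Then f and g are both additive, but their min-plus convolution h = f ⊗ g is not additive: there exist s ≤ t ≤ u with h(s,u) ≠ h(s,t) + h(t,u) (for example s = 1, t = 3, u = 5, where h(1,3) + h(3,5) = 2 < 3 = h(1,5)). -/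
/-- `f(s,t) = t - s`. -/
noncomputable def fEx : ℕ → ℕ → ℝ := fun s t => (t : ℝ) - (s : ℝ)

/-- `g(s,t) = 2(⌊t/2⌋ - ⌊s/2⌋)`. -/
noncomputable def gEx : ℕ → ℕ → ℝ := fun s t => 2 * (((t / 2 : ℕ) : ℝ) - ((s / 2 : ℕ) : ℝ))

lemma h13 : minplus fEx gEx 1 3 = 1 := by
  apply IsLeast.csInf_eq
  constructor
  · exact ⟨2, by norm_num, by norm_num [fEx, gEx]⟩
  · rintro x ⟨t, ⟨h1, h2⟩, rfl⟩
    interval_cases t <;> norm_num [fEx, gEx]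

lemma h35 : minplus fEx gEx 3 5 = 1 := by
  apply IsLeast.csInf_eq
  constructor
  · exact ⟨4, by norm_num, by norm_num [fEx, gEx]⟩
  · rintro x ⟨t, ⟨h1, h2⟩, rfl⟩
    interval_cases t <;> norm_num [fEx, gEx]

lemma h15 : minplus fEx gEx 1 5 = 3 := by
  apply IsLeast.csInf_eq
  constructor
  · exact ⟨2, by norm_num, by norm_num [fEx, gEx]⟩
  · rintro x ⟨t, ⟨h1, h2⟩, rfl⟩
    interval_cases t <;> norm_num [fEx, gEx]

/-- Counterexample: `f(s,t) = t - s` and `g(s,t) = 2(⌊t/2⌋ - ⌊s/2⌋)` are both additive,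
but their min-plus convolution `h = f ⊗ g` is not additive; in particular
`h(1,3) + h(3,5) = 2 < 3 = h(1,5)`. -/
theorem minplus_not_additive_counterexample :
    (∀ s t u : ℕ, s ≤ t → t ≤ u → fEx s u = fEx s t + fEx t u) ∧
    (∀ s t u : ℕ, s ≤ t → t ≤ u → gEx s u = gEx s t + gEx t u) ∧
    (minplus fEx gEx 1 3 + minplus fEx gEx 3 5 = 2 ∧ minplus fEx gEx 1 5 = 3) ∧
    (∃ s t u : ℕ, s ≤ t ∧ t ≤ u ∧
      minplus fEx gEx s u ≠ minplus fEx gEx s t + minplus fEx gEx t u) := by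
  refine ⟨fun s t u _ _ => by simp only [fEx]; ring,
    fun s t u _ _ => by simp [gEx]; ring,
    ⟨by rw [h13, h35]; norm_num, h15⟩,
    ⟨1, 3, 5, by norm_num, by norm_num, by rw [h13, h35, h15]; norm_num⟩⟩
end

section
/- (Minimal probe, necessity) Fix t > 0 and let S(τ,t) be a real-valued bivariate function defined for 0 ≤ τ ≤ t. Let A : [0,t] → ℝ be any probe with A(0) = 0 such that A(τ₀) ≠ S(0,t) − S(τ₀,t) for some τ₀ ∈ (0,t], and let D(t) = min over τ in [0,t] of { A(τ) + S(τ,t) }. Then there exists τ ∈ [0,t] with D(t) − A(τ) < S(τ,t), i.e., the lower estimate is strict for some τ. -/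
/-- Lemma 3, necessity: fix `t > 0` and a service process `S(τ,t)` for `0 ≤ τ ≤ t`.
If a probe `A` with `A(0) = 0` differs from the minimal probe `A_mp(τ) = S(0,t) - S(τ,t)`
at some `τ₀ ∈ (0,t]`, then with departures
`D(t) = min over τ ∈ [0,t] of { A(τ) + S(τ,t) }` the lower estimate is strict somewhere:
there exists `τ ∈ [0,t]` with `D(t) - A(τ) < S(τ,t)`. -/
theorem minimal_probe_necessary (t : ℕ) (ht : 0 < t) (S : ℕ → ℕ → ℝ)
    (A : ℕ → ℝ) (hA0 : A 0 = 0)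
    (hne : ∃ τ₀, 0 < τ₀ ∧ τ₀ ≤ t ∧ A τ₀ ≠ S 0 t - S τ₀ t) :
    ∃ τ ≤ t, sInf ((fun υ => A υ + S υ t) '' Set.Icc 0 t) - A τ < S τ t := by
  set F := ((fun υ => A υ + S υ t) '' Set.Icc 0 t) with hF
  have hbdd : BddBelow F := ((Set.finite_Icc 0 t).image _).bddBelow
  have hmem : ∀ τ ≤ t, A τ + S τ t ∈ F := fun τ hτ =>
    Set.mem_image_of_mem _ ⟨Nat.zero_le _, hτ⟩
  by_contra h
  push_neg at h
  have heq : ∀ τ ≤ t, sInf F = A τ + S τ t := by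
    intro τ hτ
    have h1 : sInf F ≤ A τ + S τ t := csInf_le hbdd (hmem τ hτ)
    have h2 := h τ hτ
    linarith
  obtain ⟨τ₀, hτ₀, hτ₀t, hneq⟩ := hne
  have e0 := heq 0 (Nat.zero_le _)
  have e1 := heq τ₀ hτ₀t
  rw [hA0] at e0
  apply hneq
  linarith
end

section
/- (Delay bound) Let A : ℕ → ℝ be nondecreasing cumulative arrivals and S(τ,t) ≥ 0 a bivariate service process defined for 0 ≤ τ ≤ t. Suppose the departures satisfy D(s) ≥ min over τ in [0,s] of { A(τ) + S(τ,s) } for all s ≥ 0. Fix t ≥ 0, and suppose w ≥ 0 satisfies max over τ in [0,t] of { A(t) − A(τ) − S(τ,t+w) } ≤ 0. Then A(t) ≤ D(t+w); consequently the first-come first-serve delay W(t) = min{ w ≥ 0 : A(t) ≤ D(t+w) } satisfies W(t) ≤ w. -/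
/-- Delay bound: let `A` be nondecreasing cumulative arrivals and `S(τ,t) ≥ 0` a
bivariate service process, and suppose the departures satisfy
`D(s) ≥ min over τ ∈ [0,s] of { A(τ) + S(τ,s) }` for all `s`. Fix `t` and suppose
`w` satisfies `max over τ ∈ [0,t] of { A(t) - A(τ) - S(τ,t+w) } ≤ 0`. Then
`A(t) ≤ D(t+w)`, and consequently the fcfs delay
`W(t) = min { w ≥ 0 : A(t) ≤ D(t+w) }` satisfies `W(t) ≤ w`. -/
theorem delay_bound (A D : ℕ → ℝ) (S : ℕ → ℕ → ℝ)
    (hA : Monotone A) (hS : ∀ τ s : ℕ, τ ≤ s → 0 ≤ S τ s)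
    (hD : ∀ s : ℕ, D s ≥ sInf ((fun τ => A τ + S τ s) '' Set.Icc 0 s))
    (t w : ℕ)
    (hw : sSup ((fun τ => A t - A τ - S τ (t + w)) '' Set.Icc 0 t) ≤ 0) :
    A t ≤ D (t + w) ∧ sInf {w' : ℕ | A t ≤ D (t + w')} ≤ w := by
  have hmain : A t ≤ D (t + w) := by
    refine le_trans ?_ (hD (t + w))
    apply le_csInf
    · exact ⟨A 0 + S 0 (t + w), ⟨0, by simp⟩⟩
    · rintro x ⟨τ, hτ, rfl⟩
      simp only [Set.mem_Icc] at hτ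
      show A t ≤ A τ + S τ (t + w)
      by_cases h : τ ≤ t
      · have hmem : A t - A τ - S τ (t + w) ∈
            (fun τ => A t - A τ - S τ (t + w)) '' Set.Icc 0 t :=
          ⟨τ, Set.mem_Icc.mpr ⟨Nat.zero_le _, h⟩, rfl⟩
        have hbdd : BddAbove ((fun τ => A t - A τ - S τ (t + w)) '' Set.Icc 0 t) :=
          (Set.finite_Icc 0 t).image _ |>.bddAbove
        have := le_csSup hbdd hmem
        linarith [le_trans this hw]
      · push_neg at h
        have := hA h.le
        have := hS τ (t + w) hτ.2
        linarith
  refine ⟨hmain, Nat.sInf_le hmain⟩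
end

section
/- (Concatenation of two systems) Let A : ℕ → ℝ be cumulative arrivals and S¹, S² bivariate real-valued service processes. Suppose D₁(τ) ≥ min over υ in [0,τ] of { A(υ) + S¹(υ,τ) } for all τ ≥ 0, and D₂(t) ≥ min over τ in [0,t] of { D₁(τ) + S²(τ,t) } for all t ≥ 0. Then D₂(t) ≥ min over υ in [0,t] of { A(υ) + (S¹ ⊗ S²)(υ,t) } for all t ≥ 0, where (S¹ ⊗ S²)(υ,t) = min over τ in [υ,t] of { S¹(υ,τ) + S²(τ,t) }. -/
/-- Concatenation of two systems: if
`D₁(τ) ≥ min over υ ∈ [0,τ] of { A(υ) + S¹(υ,τ) }` for all `τ` and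
`D₂(t) ≥ min over τ ∈ [0,t] of { D₁(τ) + S²(τ,t) }` for all `t`, then
`D₂(t) ≥ min over υ ∈ [0,t] of { A(υ) + (S¹ ⊗ S²)(υ,t) }` for all `t`. -/
theorem concatenation (A D₁ D₂ : ℕ → ℝ) (S₁ S₂ : ℕ → ℕ → ℝ)
    (h1 : ∀ τ : ℕ, D₁ τ ≥ sInf ((fun υ => A υ + S₁ υ τ) '' Set.Icc 0 τ))
    (h2 : ∀ t : ℕ, D₂ t ≥ sInf ((fun τ => D₁ τ + S₂ τ t) '' Set.Icc 0 t)) :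
    ∀ t : ℕ, D₂ t ≥ sInf ((fun υ => A υ + minplus S₁ S₂ υ t) '' Set.Icc 0 t) := by
  intro t
  refine le_trans ?_ (h2 t)
  apply le_csInf ((Set.nonempty_Icc.mpr (Nat.zero_le t)).image _)
  rintro x ⟨τ, hτ, rfl⟩
  have hfin : ((fun υ => A υ + S₁ υ τ) '' Set.Icc 0 τ).Finite :=
    (Set.finite_Icc 0 τ).image _
  have hne : ((fun υ => A υ + S₁ υ τ) '' Set.Icc 0 τ).Nonempty :=
    (Set.nonempty_Icc.mpr (Nat.zero_le τ)).image _
  obtain ⟨υ, hυ, hval⟩ := hne.csInf_mem hfin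
  have hD1 : A υ + S₁ υ τ ≤ D₁ τ := by simp only [] at hval; rw [hval]; exact h1 τ
  have hυt : υ ∈ Set.Icc 0 t := ⟨Nat.zero_le _, le_trans hυ.2 hτ.2⟩
  have hmp : minplus S₁ S₂ υ t ≤ S₁ υ τ + S₂ τ t := by
    apply csInf_le ((Set.finite_Icc υ t).image _).bddBelow
    exact ⟨τ, ⟨hυ.2, hτ.2⟩, rfl⟩
  calc sInf ((fun υ => A υ + minplus S₁ S₂ υ t) '' Set.Icc 0 t)
      ≤ A υ + minplus S₁ S₂ υ t :=
        csInf_le ((Set.finite_Icc 0 t).image _).bddBelow ⟨υ, hυt, rfl⟩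
    _ ≤ D₁ τ + S₂ τ t := by linarith
end

section
/- (Construction of a non-stationary service curve from the Laplace transform) Let (Ω, P) be a probability space, fix t ≥ 1, and let S(τ,t) ≥ 0 for 0 ≤ τ ≤ t be non-negative real-valued random variables with S(t,t) = 0. Let ε ∈ (0,1], ρ ∈ (0, 1/ε], and for each τ ∈ [0, t−1] let θ(τ,t) > 0 be given. Define 𝒮^ε(τ,t) = −(1/θ(τ,t)) ( ln E[e^{−θ(τ,t) S(τ,t)}] + ρ(t−τ) − ln(ρ ε) ) for τ ∈ [0, t−1] and 𝒮^ε(t,t) = ln(ρε)/θ for any θ > 0. Then P[ there exists τ ∈ [0,t] with S(τ,t) < 𝒮^ε(τ,t) ] ≤ ε; equivalently, P[ S(τ,t) ≥ 𝒮^ε(τ,t) for all τ ∈ [0,t] ] ≥ 1 − ε. -/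
open MeasureTheory

lemma sum_exp_le_aux (ρ : ℝ) (hρ : 0 < ρ) (t : ℕ) :
    ∑ τ ∈ Finset.range t, Real.exp (-(ρ * ((t : ℝ) - (τ : ℝ)))) ≤ 1 / ρ := by
  set r : ℝ := Real.exp (-ρ) with hr
  have hr0 : 0 < r := Real.exp_pos _
  have hr1 : r < 1 := Real.exp_lt_one_iff.mpr (by linarith)
  have hterm : ∀ τ ∈ Finset.range t,
      Real.exp (-(ρ * ((t : ℝ) - (τ : ℝ)))) = r ^ (t - τ) := by
    intro τ hτ
    have hτt : τ ≤ t := (Finset.mem_range.mp hτ).le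
    rw [hr, ← Real.exp_nat_mul]
    congr 1
    rw [Nat.cast_sub hτt]
    ring
  rw [Finset.sum_congr rfl hterm]
  have hreflect : ∑ τ ∈ Finset.range t, r ^ (t - τ)
      = ∑ j ∈ Finset.range t, r ^ (j + 1) := by
    rw [← Finset.sum_range_reflect (fun j => r ^ (j + 1)) t]
    refine Finset.sum_congr rfl fun τ hτ => ?_
    have hτt : τ < t := Finset.mem_range.mp hτ
    congr 1
    omega
  rw [hreflect]
  have hfac : ∑ j ∈ Finset.range t, r ^ (j + 1) = r * ∑ j ∈ Finset.range t, r ^ j := by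
    rw [Finset.mul_sum]
    exact Finset.sum_congr rfl fun j _ => by ring
  rw [hfac, geom_sum_eq hr1.ne t]
  have h1r : 0 < 1 - r := by linarith
  have hrt : (0:ℝ) ≤ r ^ t := pow_nonneg hr0.le t
  have hgeom : (r ^ t - 1) / (r - 1) ≤ 1 / (1 - r) := by
    have heq : (r ^ t - 1) / (r - 1) = (1 - r ^ t) / (1 - r) := by
      rw [← neg_div_neg_eq]; ring_nf
    rw [heq]
    gcongr
    linarith
  have h2 : r * ((r ^ t - 1) / (r - 1)) ≤ r * (1 / (1 - r)) :=
    mul_le_mul_of_nonneg_left hgeom hr0.le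
  refine h2.trans ?_
  rw [mul_one_div, div_le_div_iff₀ h1r hρ, one_mul]
  have hexp := Real.add_one_le_exp ρ
  have hmul : (ρ + 1) * r ≤ Real.exp ρ * r := mul_le_mul_of_nonneg_right hexp hr0.le
  have hone : Real.exp ρ * r = 1 := by rw [hr, ← Real.exp_add]; simp
  nlinarith

/-- Construction of a non-stationary service curve from the Laplace transform
(Eq. (14) of the paper): for a non-negative random service process `S(τ,t)` with
`S(t,t) = 0`, `ε ∈ (0,1]`, `ρ ∈ (0,1/ε]`, and `θ(τ,t) > 0`, the function
`𝒮^ε(τ,t) = -(1/θ(τ,t))( ln E[e^{-θ(τ,t) S(τ,t)}] + ρ(t-τ) - ln(ρε) )` for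
`τ ∈ [0,t-1]` (and `𝒮^ε(t,t) = ln(ρε)/θ₀` for any `θ₀ > 0`) satisfies
`P[ ∃ τ ∈ [0,t], S(τ,t) < 𝒮^ε(τ,t) ] ≤ ε`; equivalently
`P[ S(τ,t) ≥ 𝒮^ε(τ,t) for all τ ∈ [0,t] ] ≥ 1 - ε`. -/
theorem nonstationary_service_curve_construction {Ω : Type*} [MeasurableSpace Ω]
    (P : Measure Ω) [IsProbabilityMeasure P]
    (t : ℕ) (ht : 1 ≤ t) (S : Ω → ℕ → ℝ)
    (hSmeas : ∀ τ : ℕ, Measurable (fun ω => S ω τ))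
    (hSnonneg : ∀ (ω : Ω) (τ : ℕ), τ ≤ t → 0 ≤ S ω τ)
    (hStt : ∀ ω : Ω, S ω t = 0)
    (ε ρ : ℝ) (hε : ε ∈ Set.Ioc (0 : ℝ) 1) (hρ : ρ ∈ Set.Ioc (0 : ℝ) (1 / ε))
    (θ : ℕ → ℝ) (hθ : ∀ τ ≤ t - 1, 0 < θ τ)
    (θ₀ : ℝ) (hθ₀ : 0 < θ₀)
    (𝒮 : ℕ → ℝ)
    (h𝒮 : ∀ τ ≤ t - 1,
      𝒮 τ = -(1 / θ τ) * (Real.log (∫ ω, Real.exp (-(θ τ) * S ω τ) ∂P)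
        + ρ * ((t : ℝ) - (τ : ℝ)) - Real.log (ρ * ε)))
    (h𝒮t : 𝒮 t = Real.log (ρ * ε) / θ₀) :
    P {ω : Ω | ∃ τ ≤ t, S ω τ < 𝒮 τ} ≤ ENNReal.ofReal ε ∧
    P {ω : Ω | ∀ τ ≤ t, 𝒮 τ ≤ S ω τ} ≥ 1 - ENNReal.ofReal ε := by
  obtain ⟨hε0, hε1⟩ := hε
  obtain ⟨hρ0, hρ1⟩ := hρ
  have hρε0 : 0 < ρ * ε := mul_pos hρ0 hε0
  have hρε1 : ρ * ε ≤ 1 := by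
    calc ρ * ε ≤ (1 / ε) * ε := mul_le_mul_of_nonneg_right hρ1 hε0.le
    _ = 1 := by field_simp
  have h𝒮t_le : 𝒮 t ≤ 0 := by
    rw [h𝒮t]
    exact div_nonpos_of_nonpos_of_nonneg (Real.log_nonpos hρε0.le hρε1) hθ₀.le
  -- integrability of the Laplace-transform integrand
  have hint : ∀ τ < t, Integrable (fun ω => Real.exp (-(θ τ) * S ω τ)) P := by
    intro τ hτ
    have hθτ : 0 < θ τ := hθ τ (by omega)
    refine Integrable.mono' (integrable_const 1)
      ((Real.measurable_exp.comp (measurable_const.mul (hSmeas τ))).aestronglyMeasurable)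
      (ae_of_all _ fun ω => ?_)
    rw [Real.norm_eq_abs, abs_of_pos (Real.exp_pos _)]
    refine Real.exp_le_one_iff.mpr ?_
    nlinarith [hSnonneg ω τ hτ.le]
  -- Chernoff bound for each τ < t
  have hchern : ∀ τ < t, P {ω | S ω τ ≤ 𝒮 τ}
      ≤ ENNReal.ofReal (ρ * ε * Real.exp (-(ρ * ((t : ℝ) - (τ : ℝ))))) := by
    intro τ hτ
    have hθτ : 0 < θ τ := hθ τ (by omega)
    have hI := hint τ hτ
    set E : ℝ := ∫ ω, Real.exp (-(θ τ) * S ω τ) ∂P with hE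
    have hEmgf : ProbabilityTheory.mgf (fun ω => S ω τ) P (-(θ τ)) = E := by
      simp only [ProbabilityTheory.mgf, hE]
    have hEpos : 0 < E := by
      rw [← hEmgf]
      exact ProbabilityTheory.mgf_pos hI
    have hch := ProbabilityTheory.measure_le_le_exp_mul_mgf (X := fun ω => S ω τ)
      (μ := P) (t := -(θ τ)) (𝒮 τ) (neg_nonpos.mpr hθτ.le) hI
    rw [hEmgf, neg_neg] at hch
    have hlog : θ τ * 𝒮 τ = Real.log (ρ * ε) - Real.log E - ρ * ((t : ℝ) - (τ : ℝ)) := by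
      rw [h𝒮 τ (by omega), ← hE]
      field_simp
      ring
    have hval : Real.exp (θ τ * 𝒮 τ) * E = ρ * ε * Real.exp (-(ρ * ((t : ℝ) - (τ : ℝ)))) := by
      rw [hlog, Real.exp_sub, Real.exp_sub, Real.exp_log hρε0, Real.exp_log hEpos,
        Real.exp_neg]
      field_simp
    rw [ENNReal.le_ofReal_iff_toReal_le (measure_ne_top P _) (by positivity)]
    calc (P {ω | S ω τ ≤ 𝒮 τ}).toReal ≤ Real.exp (θ τ * 𝒮 τ) * E := hch
      _ = ρ * ε * Real.exp (-(ρ * ((t : ℝ) - (τ : ℝ)))) := hval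
  -- union bound
  have hsub : {ω : Ω | ∃ τ ≤ t, S ω τ < 𝒮 τ}
      ⊆ ⋃ τ ∈ Finset.range t, {ω | S ω τ ≤ 𝒮 τ} := by
    rintro ω ⟨τ, hτ, hlt⟩
    have hτt : τ < t := by
      rcases lt_or_eq_of_le hτ with h | h
      · exact h
      · exfalso
        subst h
        have := hStt ω
        linarith [h𝒮t_le]
    simp only [Set.mem_iUnion, Finset.mem_range, Set.mem_setOf_eq]
    exact ⟨τ, hτt, hlt.le⟩
  have hPA : P {ω : Ω | ∃ τ ≤ t, S ω τ < 𝒮 τ} ≤ ENNReal.ofReal ε := by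
    calc P {ω : Ω | ∃ τ ≤ t, S ω τ < 𝒮 τ}
        ≤ P (⋃ τ ∈ Finset.range t, {ω | S ω τ ≤ 𝒮 τ}) := measure_mono hsub
      _ ≤ ∑ τ ∈ Finset.range t, P {ω | S ω τ ≤ 𝒮 τ} := measure_biUnion_finset_le _ _
      _ ≤ ∑ τ ∈ Finset.range t,
          ENNReal.ofReal (ρ * ε * Real.exp (-(ρ * ((t : ℝ) - (τ : ℝ))))) :=
        Finset.sum_le_sum fun τ hτ => hchern τ (Finset.mem_range.mp hτ)
      _ = ENNReal.ofReal (∑ τ ∈ Finset.range t,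
          ρ * ε * Real.exp (-(ρ * ((t : ℝ) - (τ : ℝ))))) := by
        rw [ENNReal.ofReal_sum_of_nonneg fun τ _ => by positivity]
      _ ≤ ENNReal.ofReal ε := by
        refine ENNReal.ofReal_le_ofReal ?_
        have hsum := sum_exp_le_aux ρ hρ0 t
        calc ∑ τ ∈ Finset.range t, ρ * ε * Real.exp (-(ρ * ((t : ℝ) - (τ : ℝ))))
            = ρ * ε * ∑ τ ∈ Finset.range t, Real.exp (-(ρ * ((t : ℝ) - (τ : ℝ)))) :=
            (Finset.mul_sum _ _ _).symm
          _ ≤ ρ * ε * (1 / ρ) := mul_le_mul_of_nonneg_left hsum hρε0.le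
          _ = ε := by field_simp
  refine ⟨hPA, ?_⟩
  have hAeq : {ω : Ω | ∃ τ ≤ t, S ω τ < 𝒮 τ}
      = ⋃ τ ∈ Finset.range (t + 1), {ω | S ω τ < 𝒮 τ} := by
    ext ω
    simp [Nat.lt_succ_iff]
  have hAm : MeasurableSet {ω : Ω | ∃ τ ≤ t, S ω τ < 𝒮 τ} := by
    rw [hAeq]
    exact (Finset.range (t + 1)).measurableSet_biUnion fun τ _ =>
      measurableSet_lt (hSmeas τ) measurable_const
  have hcompl : {ω : Ω | ∀ τ ≤ t, 𝒮 τ ≤ S ω τ}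
      = {ω : Ω | ∃ τ ≤ t, S ω τ < 𝒮 τ}ᶜ := by
    ext ω
    simp [not_lt]
  rw [hcompl, prob_compl_eq_one_sub hAm]
  exact tsub_le_tsub_left hPA 1
end

section
/- (Statistical envelope via Doob's martingale inequality) Let X₁, X₂, … be independent, identically distributed real-valued random variables, let θ > 0 be such that M = E[e^{θ X₁}] is finite, and set ρ = (ln M)/θ. For 0 ≤ τ ≤ t define A(τ,t) = X_{τ+1} + ⋯ + X_t. Then for every t ≥ 1 and every σ ≥ 0: P[ there exists τ ∈ [0, t−1] with A(τ,t) − ρ(t−τ) ≥ σ ] ≤ e^{−θσ}. Consequently, with 𝒜^ε(s) = ρ s − (ln ε)/θ, the sample-path envelope guarantee P[ A(τ,t) ≤ 𝒜^ε(t−τ) for all τ ∈ [0,t] ] ≥ 1 − ε holds for every ε ∈ (0,1]. -/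
open MeasureTheory ProbabilityTheory

section StatEnvAux

variable {Ω : Type*} [MeasurableSpace Ω]

/-- The exceedance set at time `τ`. -/
private def Bset (X : ℕ → Ω → ℝ) (ρ σ : ℝ) (t τ : ℕ) : Set Ω :=
  {ω | σ ≤ (∑ i ∈ Finset.Ico τ t, X i ω) - ρ * ((t : ℝ) - (τ : ℝ))}

private lemma Bset_meas (X : ℕ → Ω → ℝ) (hX : ∀ i, Measurable (X i)) (ρ σ : ℝ) (t τ : ℕ) :
    MeasurableSet (Bset X ρ σ t τ) :=
  measurableSet_le measurable_const
    ((Finset.measurable_sum _ fun i _ => hX i).sub measurable_const)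

/-- Last exceedance happens at `τ`. -/
private def Eset (X : ℕ → Ω → ℝ) (ρ σ : ℝ) (t τ : ℕ) : Set Ω :=
  Bset X ρ σ t τ ∩ ⋂ (τ' : ℕ) (_ : τ < τ') (_ : τ' < t), (Bset X ρ σ t τ')ᶜ

private lemma Eset_mem {X : ℕ → Ω → ℝ} {ρ σ : ℝ} {t τ : ℕ} {ω : Ω} :
    ω ∈ Eset X ρ σ t τ ↔
      ω ∈ Bset X ρ σ t τ ∧ ∀ τ', τ < τ' → τ' < t → ω ∉ Bset X ρ σ t τ' := by
  simp [Eset, Set.mem_iInter]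

private lemma Eset_meas (X : ℕ → Ω → ℝ) (hX : ∀ i, Measurable (X i)) (ρ σ : ℝ) (t τ : ℕ) :
    MeasurableSet (Eset X ρ σ t τ) :=
  (Bset_meas X hX ρ σ t τ).inter <| MeasurableSet.iInter fun τ' =>
    MeasurableSet.iInter fun _ => MeasurableSet.iInter fun _ => (Bset_meas X hX ρ σ t τ').compl

private lemma Eset_disj (X : ℕ → Ω → ℝ) (ρ σ : ℝ) (t : ℕ) {τ τ' : ℕ}
    (h : τ < τ') (h' : τ' < t) : Disjoint (Eset X ρ σ t τ) (Eset X ρ σ t τ') := by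
  rw [Set.disjoint_left]
  intro ω hω hω'
  exact (Eset_mem.1 hω).2 τ' h h' (Eset_mem.1 hω').1

private lemma Eset_biUnion (X : ℕ → Ω → ℝ) (ρ σ : ℝ) (t : ℕ) :
    (⋃ τ ∈ Finset.range t, Eset X ρ σ t τ) = ⋃ τ ∈ Finset.range t, Bset X ρ σ t τ := by
  classical
  ext ω
  simp only [Set.mem_iUnion, Finset.mem_range, exists_prop]
  constructor
  · rintro ⟨τ, hτ, hω⟩
    exact ⟨τ, hτ, (Eset_mem.1 hω).1⟩
  · rintro ⟨τ, hτ, hω⟩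
    set F : Finset ℕ := (Finset.range t).filter (fun τ => ω ∈ Bset X ρ σ t τ) with hF
    have hne : F.Nonempty := ⟨τ, by simp [hF, hτ, hω]⟩
    refine ⟨F.max' hne, ?_, ?_⟩
    · have := F.max'_mem hne
      simp only [hF, Finset.mem_filter, Finset.mem_range] at this
      exact this.1
    · rw [Eset_mem]
      have hmem := F.max'_mem hne
      simp only [hF, Finset.mem_filter, Finset.mem_range] at hmem
      refine ⟨hmem.2, fun τ' h1 h2 hmem' => ?_⟩
      have : τ' ∈ F := by simp [hF, h2, hmem']
      exact absurd (F.le_max' τ' this) (not_le.2 h1)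

/-- Independence of the stopped indicator times exponential from the past block. -/
private lemma indep_ZW (P : Measure Ω) (X : ℕ → Ω → ℝ) (hX : ∀ i, Measurable (X i))
    (hind : iIndepFun X P) (θ ρ σ : ℝ) (t τ : ℕ) :
    IndepFun
      (fun ω => Set.indicator (Eset X ρ σ t τ)
        (fun ω => ∏ i ∈ Finset.Ico τ t, Real.exp (θ * X i ω)) ω)
      (fun ω => ∏ i ∈ Finset.range τ, Real.exp (θ * X i ω)) P := by
  classical
  set S₁ : Finset ℕ := Finset.Ico τ t with hS₁
  set S₂ : Finset ℕ := Finset.range τ with hS₂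
  have disj : Disjoint S₁ S₂ := by
    rw [Finset.disjoint_left]
    intro a ha ha'
    simp only [hS₁, hS₂, Finset.mem_Ico, Finset.mem_range] at ha ha'
    omega
  -- the sum functionals on the product space
  set g : ℕ → (S₁ → ℝ) → ℝ :=
    fun τ' v => ∑ i : S₁, (if τ' ≤ (i : ℕ) then v i else 0) with hg
  have hgmeas : ∀ τ', Measurable (g τ') := by
    intro τ'
    apply Finset.measurable_sum
    intro i _
    by_cases h : τ' ≤ (i : ℕ)
    · simpa [h] using measurable_pi_apply i
    · simpa [h] using measurable_const
  have hgeq : ∀ τ', τ ≤ τ' → ∀ ω : Ω,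
      g τ' (fun i : S₁ => X i ω) = ∑ i ∈ Finset.Ico τ' t, X i ω := by
    intro τ' hττ' ω
    have h1 : g τ' (fun i : S₁ => X i ω)
        = ∑ i ∈ S₁, (if τ' ≤ i then X i ω else 0) :=
      Finset.sum_coe_sort S₁ (fun i => if τ' ≤ i then X i ω else 0)
    rw [h1, ← Finset.sum_filter]
    congr 1
    ext n
    simp only [hS₁, Finset.mem_filter, Finset.mem_Ico]
    omega
  set C : Set (S₁ → ℝ) :=
    {v | σ ≤ g τ v - ρ * ((t : ℝ) - (τ : ℝ))} ∩
      ⋂ (τ' : ℕ) (_ : τ < τ') (_ : τ' < t),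
        {v | σ ≤ g τ' v - ρ * ((t : ℝ) - (τ' : ℝ))}ᶜ with hC
  have hCmeas : MeasurableSet C := by
    refine (measurableSet_le measurable_const ((hgmeas τ).sub measurable_const)).inter ?_
    exact MeasurableSet.iInter fun τ' => MeasurableSet.iInter fun _ =>
      MeasurableSet.iInter fun _ =>
        (measurableSet_le measurable_const ((hgmeas τ').sub measurable_const)).compl
  set φ : (S₁ → ℝ) → ℝ :=
    C.indicator (fun v => ∏ i : S₁, Real.exp (θ * v i)) with hφdef
  have hφ : Measurable φ :=
    Measurable.indicator (by fun_prop) hCmeas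
  set ψ : (S₂ → ℝ) → ℝ := fun v => ∏ i : S₂, Real.exp (θ * v i) with hψdef
  have hψ : Measurable ψ := by
    fun_prop
  have base := hind.indepFun_finset S₁ S₂ disj hX
  have key := base.comp hφ hψ
  have hCiff : ∀ ω : Ω, ((fun i : S₁ => X i ω) ∈ C) ↔ ω ∈ Eset X ρ σ t τ := by
    intro ω
    rw [hC, Eset_mem]
    simp only [Set.mem_inter_iff, Set.mem_setOf_eq, Set.mem_iInter, Set.mem_compl_iff]
    have e : ∀ τ', τ ≤ τ' →
        g τ' (fun i : S₁ => X i ω) = ∑ i ∈ Finset.Ico τ' t, X i ω :=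
      fun τ' h => hgeq τ' h ω
    constructor
    · rintro ⟨h1, h2⟩
      rw [e τ le_rfl] at h1
      refine ⟨h1, fun τ' hh1 hh2 hmem' => ?_⟩
      have h3 := h2 τ' hh1 hh2
      rw [e τ' hh1.le] at h3
      exact h3 hmem'
    · rintro ⟨h1, h2⟩
      refine ⟨?_, fun τ' hh1 hh2 => ?_⟩
      · rw [e τ le_rfl]; exact h1
      · rw [e τ' hh1.le]; exact h2 τ' hh1 hh2
  have hval : ∀ ω : Ω, (∏ i : S₁, Real.exp (θ * X i ω))
      = ∏ i ∈ Finset.Ico τ t, Real.exp (θ * X i ω) :=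
    fun ω => Finset.prod_coe_sort S₁ (fun i => Real.exp (θ * X i ω))
  have hfun1 : (fun ω => Set.indicator (Eset X ρ σ t τ)
      (fun ω => ∏ i ∈ Finset.Ico τ t, Real.exp (θ * X i ω)) ω)
      = φ ∘ (fun ω (i : S₁) => X i ω) := by
    funext ω
    simp only [Function.comp_apply, hφdef]
    by_cases h : ω ∈ Eset X ρ σ t τ
    · rw [Set.indicator_of_mem h, Set.indicator_of_mem ((hCiff ω).2 h)]
      exact (hval ω).symm
    · rw [Set.indicator_of_notMem h,
        Set.indicator_of_notMem (fun hc => h ((hCiff ω).1 hc))]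
  have hfun2 : (fun ω => ∏ i ∈ Finset.range τ, Real.exp (θ * X i ω))
      = ψ ∘ (fun ω (i : S₂) => X i ω) := by
    funext ω
    simp only [Function.comp_apply, hψdef]
    exact (Finset.prod_coe_sort S₂ (fun i => Real.exp (θ * X i ω))).symm
  rw [hfun1, hfun2]
  exact key

/-- Product of independent nonnegative integrable variables: integrability and value. -/
private lemma aux_prod_int (P : Measure Ω) [IsProbabilityMeasure P]
    (Y : ℕ → Ω → ℝ) (hmeas : ∀ i, Measurable (Y i))
    (hindep : iIndepFun Y P)
    (hint : ∀ i, Integrable (Y i) P)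
    (M : ℝ) (hM : ∀ i, ∫ ω, Y i ω ∂P = M) :
    ∀ s : Finset ℕ, Integrable (fun ω => ∏ i ∈ s, Y i ω) P ∧
      (∫ ω, ∏ i ∈ s, Y i ω ∂P) = M ^ s.card := by
  classical
  intro s
  induction s using Finset.induction_on with
  | empty => simp
  | @insert a s ha ih =>
    have hps : (fun ω => ∏ i ∈ s, Y i ω) = ∏ j ∈ s, Y j := by
      funext ω; rw [Finset.prod_apply]
    have hind : IndepFun (Y a) (∏ j ∈ s, Y j) P :=
      (hindep.indepFun_finsetProd_of_notMem hmeas ha).symm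
    have hint_s : Integrable (∏ j ∈ s, Y j) P := by rw [← hps]; exact ih.1
    have hmul : Integrable (Y a * ∏ j ∈ s, Y j) P :=
      hind.integrable_mul (hint a) hint_s
    have hfun : (fun ω => ∏ i ∈ insert a s, Y i ω) = Y a * ∏ j ∈ s, Y j := by
      funext ω
      rw [Finset.prod_insert ha]
      simp [Finset.prod_apply]
    constructor
    · rw [hfun]; exact hmul
    · rw [hfun]
      rw [hind.integral_mul_eq_mul_integral (hint a).aestronglyMeasurable hint_s.aestronglyMeasurable]
      rw [← hps, ih.2, hM a, Finset.card_insert_of_notMem ha, pow_succ]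
      ring

end StatEnvAux

/-- Statistical envelope via Doob's martingale inequality: let `X₁, X₂, …` be iid real
random variables, `θ > 0` with `M = E[exp (θ X₁)]` finite, and `ρ = (ln M)/θ`. With
`A(τ,t) = X_{τ+1} + ⋯ + X_t`, for every `t ≥ 1` and `σ ≥ 0`,
`P[ ∃ τ ∈ [0,t-1], A(τ,t) - ρ(t-τ) ≥ σ ] ≤ e^{-θσ}`; consequently, for every
`ε ∈ (0,1]`, the envelope `𝒜^ε(s) = ρ s - (ln ε)/θ` satisfies the sample-path guarantee
`P[ A(τ,t) ≤ 𝒜^ε(t-τ) for all τ ∈ [0,t] ] ≥ 1 - ε`. -/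
theorem statistical_envelope_doob {Ω : Type*} [MeasurableSpace Ω]
    (P : Measure Ω) [IsProbabilityMeasure P]
    (X : ℕ → Ω → ℝ) (hmeas : ∀ i, Measurable (X i))
    (hindep : iIndepFun X P)
    (hident : ∀ i, IdentDistrib (X i) (X 0) P P)
    (θ : ℝ) (hθ : 0 < θ)
    (hInt : Integrable (fun ω => Real.exp (θ * X 0 ω)) P)
    (ρ : ℝ) (hρ : ρ = Real.log (∫ ω, Real.exp (θ * X 0 ω) ∂P) / θ) :
    (∀ t : ℕ, 1 ≤ t → ∀ σ : ℝ, 0 ≤ σ →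
      P {ω : Ω | ∃ τ ≤ t - 1,
          σ ≤ (∑ i ∈ Finset.Ico τ t, X i ω) - ρ * ((t : ℝ) - (τ : ℝ))}
        ≤ ENNReal.ofReal (Real.exp (-θ * σ))) ∧
    (∀ ε : ℝ, ε ∈ Set.Ioc (0 : ℝ) 1 → ∀ t : ℕ,
      P {ω : Ω | ∀ τ ≤ t,
          (∑ i ∈ Finset.Ico τ t, X i ω)
            ≤ ρ * ((t : ℝ) - (τ : ℝ)) - Real.log ε / θ}
        ≥ 1 - ENNReal.ofReal ε) := by
  classical
  have hθne : θ ≠ 0 := ne_of_gt hθ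
  set M : ℝ := ∫ ω, Real.exp (θ * X 0 ω) ∂P with hMdef
  set Y : ℕ → Ω → ℝ := fun i => (fun x => Real.exp (θ * x)) ∘ X i with hYdef
  have hexpmeas : Measurable (fun x : ℝ => Real.exp (θ * x)) :=
    Real.measurable_exp.comp (measurable_id.const_mul θ)
  have hYmeas : ∀ i, Measurable (Y i) := fun i => hexpmeas.comp (hmeas i)
  have hYindep : iIndepFun Y P :=
    hindep.comp (fun _ x => Real.exp (θ * x)) fun _ => hexpmeas
  have hYident : ∀ i, IdentDistrib (Y i) (Y 0) P P := fun i => (hident i).comp hexpmeas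
  have hYint : ∀ i, Integrable (Y i) P := fun i => (hYident i).integrable_iff.2 hInt
  have hYM : ∀ i, ∫ ω, Y i ω ∂P = M := fun i => (hYident i).integral_eq
  have hMpos : 0 < M := integral_exp_pos hInt
  have hexpρ : Real.exp (θ * ρ) = M := by
    have h1 : θ * ρ = Real.log M := by rw [hρ]; field_simp
    rw [h1, Real.exp_log hMpos]
  have hprod := aux_prod_int P Y hYmeas hYindep hYint M hYM
  -- key maximal inequality
  have key : ∀ t : ℕ, 1 ≤ t → ∀ σ : ℝ, 0 ≤ σ →
      P {ω : Ω | ∃ τ ≤ t - 1,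
          σ ≤ (∑ i ∈ Finset.Ico τ t, X i ω) - ρ * ((t : ℝ) - (τ : ℝ))}
        ≤ ENNReal.ofReal (Real.exp (-θ * σ)) := by
    intro t ht σ hσ
    have hsetEq : {ω : Ω | ∃ τ ≤ t - 1,
        σ ≤ (∑ i ∈ Finset.Ico τ t, X i ω) - ρ * ((t : ℝ) - (τ : ℝ))}
        = ⋃ τ ∈ Finset.range t, Bset X ρ σ t τ := by
      ext ω
      simp only [Set.mem_setOf_eq, Set.mem_iUnion, Finset.mem_range, Bset, exists_prop]
      constructor
      · rintro ⟨τ, hτ, h⟩; exact ⟨τ, by omega, h⟩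
      · rintro ⟨τ, hτ, h⟩; exact ⟨τ, by omega, h⟩
    have hpd : (↑(Finset.range t) : Set ℕ).PairwiseDisjoint (Eset X ρ σ t) := by
      intro a ha b hb hab
      simp only [Finset.coe_range, Set.mem_Iio] at ha hb
      rcases lt_or_gt_of_ne hab with h | h
      · exact Eset_disj X ρ σ t h hb
      · exact (Eset_disj X ρ σ t h ha).symm
    have hEm : ∀ τ, MeasurableSet (Eset X ρ σ t τ) := Eset_meas X hmeas ρ σ t
    have hPsum : P (⋃ τ ∈ Finset.range t, Eset X ρ σ t τ)
        = ∑ τ ∈ Finset.range t, P (Eset X ρ σ t τ) :=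
      measure_biUnion_finset hpd fun τ _ => hEm τ
    -- the big product over range t
    set Q₀ : Ω → ℝ := fun ω => ∏ i ∈ Finset.range t, Y i ω with hQ₀
    have hQ₀int : Integrable Q₀ P := (hprod (Finset.range t)).1
    have hQ₀val : ∫ ω, Q₀ ω ∂P = M ^ t := by
      have := (hprod (Finset.range t)).2
      rwa [Finset.card_range] at this
    -- main per-τ estimate
    have main : ∀ τ ∈ Finset.range t,
        Real.exp (θ * σ) * M ^ t * (P (Eset X ρ σ t τ)).toReal
          ≤ ∫ ω, Set.indicator (Eset X ρ σ t τ) Q₀ ω ∂P := by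
      intro τ hτmem
      have hτ : τ < t := Finset.mem_range.1 hτmem
      set Eτ := Eset X ρ σ t τ with hEτ
      set Qτ : Ω → ℝ := fun ω => ∏ i ∈ Finset.Ico τ t, Y i ω with hQτ
      have hQτint : Integrable Qτ P := (hprod (Finset.Ico τ t)).1
      set Z₁ : Ω → ℝ := fun ω => Eτ.indicator Qτ ω with hZ₁
      have hZ₁int : Integrable Z₁ P := hQτint.indicator (hEm τ)
      have hcast : ((t - τ : ℕ) : ℝ) = (t : ℝ) - (τ : ℝ) := by
        push_cast [Nat.cast_sub hτ.le]; ring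
      -- step 1
      have hptw : ∀ ω ∈ Eτ, Real.exp (θ * σ) * M ^ (t - τ) ≤ Qτ ω := by
        intro ω hω
        have hB : σ ≤ (∑ i ∈ Finset.Ico τ t, X i ω) - ρ * ((t : ℝ) - (τ : ℝ)) :=
          (Eset_mem.1 hω).1
        have hQeq : Qτ ω = Real.exp (θ * ∑ i ∈ Finset.Ico τ t, X i ω) := by
          rw [Finset.mul_sum, Real.exp_sum]
          rfl
        rw [hQeq, ← hexpρ, ← Real.exp_nat_mul, ← Real.exp_add]
        apply Real.exp_le_exp.2
        have : σ + ρ * ((t : ℝ) - (τ : ℝ)) ≤ ∑ i ∈ Finset.Ico τ t, X i ω := by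
          linarith
        calc θ * σ + (t - τ : ℕ) * (θ * ρ)
            = θ * (σ + ρ * ((t : ℝ) - (τ : ℝ))) := by rw [hcast]; ring
          _ ≤ θ * ∑ i ∈ Finset.Ico τ t, X i ω :=
              mul_le_mul_of_nonneg_left this hθ.le
      have hconst_int : Integrable
          (Eτ.indicator fun _ => Real.exp (θ * σ) * M ^ (t - τ)) P :=
        (integrable_const _).indicator (hEm τ)
      have hmono : ∀ ω, Eτ.indicator (fun _ => Real.exp (θ * σ) * M ^ (t - τ)) ω ≤ Z₁ ω := by
        intro ω
        by_cases hω : ω ∈ Eτ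
        · simp only [hZ₁, Set.indicator_of_mem hω]
          exact hptw ω hω
        · simp only [hZ₁, Set.indicator_of_notMem hω]
          exact le_rfl
      have step1 : Real.exp (θ * σ) * M ^ (t - τ) * (P Eτ).toReal ≤ ∫ ω, Z₁ ω ∂P := by
        have h1 := integral_mono hconst_int hZ₁int hmono
        rwa [integral_indicator_const _ (hEm τ), smul_eq_mul, mul_comm] at h1
      -- step 2
      set W : Ω → ℝ := fun ω => ∏ i ∈ Finset.range τ, Y i ω with hW
      have hWint : Integrable W P := by
        have := (hprod (Finset.range τ)).1
        exact this
      have hWval : ∫ ω, W ω ∂P = M ^ τ := by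
        have := (hprod (Finset.range τ)).2
        rwa [Finset.card_range] at this
      have hindZW : IndepFun Z₁ W P := indep_ZW P X hmeas hindep θ ρ σ t τ
      have hZW : ∀ ω, Z₁ ω * W ω = Set.indicator Eτ Q₀ ω := by
        intro ω
        by_cases hω : ω ∈ Eτ
        · simp only [hZ₁, Set.indicator_of_mem hω]
          show (∏ i ∈ Finset.Ico τ t, Y i ω) * ∏ i ∈ Finset.range τ, Y i ω
              = ∏ i ∈ Finset.range t, Y i ω
          rw [← Finset.prod_union (by
            rw [Finset.disjoint_left]
            intro a ha ha'
            simp only [Finset.mem_Ico, Finset.mem_range] at ha ha'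
            omega)]
          congr 1
          rw [Finset.range_eq_Ico, Finset.range_eq_Ico, Finset.union_comm]
          exact Finset.Ico_union_Ico_eq_Ico (Nat.zero_le τ) hτ.le
        · simp only [hZ₁, Set.indicator_of_notMem hω, zero_mul]
      have step2 : (∫ ω, Z₁ ω ∂P) * M ^ τ = ∫ ω, Set.indicator Eτ Q₀ ω ∂P := by
        calc (∫ ω, Z₁ ω ∂P) * M ^ τ = (∫ ω, Z₁ ω ∂P) * ∫ ω, W ω ∂P := by rw [hWval]
          _ = ∫ ω, (Z₁ * W) ω ∂P := (hindZW.integral_mul_eq_mul_integral hZ₁int.aestronglyMeasurable hWint.aestronglyMeasurable).symm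
          _ = ∫ ω, Set.indicator Eτ Q₀ ω ∂P := by
              apply integral_congr_ae
              filter_upwards with ω
              exact hZW ω
      have hMτ : (0:ℝ) < M ^ τ := pow_pos hMpos τ
      have hMpow : M ^ (t - τ) * M ^ τ = M ^ t := by
        rw [← pow_add, Nat.sub_add_cancel hτ.le]
      calc Real.exp (θ * σ) * M ^ t * (P Eτ).toReal
          = (Real.exp (θ * σ) * M ^ (t - τ) * (P Eτ).toReal) * M ^ τ := by
            rw [← hMpow]; ring
        _ ≤ (∫ ω, Z₁ ω ∂P) * M ^ τ :=
            mul_le_mul_of_nonneg_right step1 hMτ.le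
        _ = ∫ ω, Set.indicator Eτ Q₀ ω ∂P := step2
    -- summation estimate
    have hsum : ∑ τ ∈ Finset.range t, ∫ ω, Set.indicator (Eset X ρ σ t τ) Q₀ ω ∂P
        ≤ M ^ t := by
      have heq : ∀ τ ∈ Finset.range t,
          ∫ ω, Set.indicator (Eset X ρ σ t τ) Q₀ ω ∂P
            = ∫ ω in Eset X ρ σ t τ, Q₀ ω ∂P := fun τ _ => integral_indicator (hEm τ)
      rw [Finset.sum_congr rfl heq]
      rw [← integral_biUnion_finset (Finset.range t) (fun τ _ => hEm τ)
        (by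
          intro a ha b hb hab
          simp only [Finset.coe_range, Set.mem_Iio] at ha hb
          rcases lt_or_gt_of_ne hab with h | h
          · exact Eset_disj X ρ σ t h hb
          · exact (Eset_disj X ρ σ t h ha).symm)
        (fun τ _ => hQ₀int.integrableOn)]
      calc ∫ ω in ⋃ τ ∈ Finset.range t, Eset X ρ σ t τ, Q₀ ω ∂P
          ≤ ∫ ω, Q₀ ω ∂P := by
            apply setIntegral_le_integral hQ₀int
            filter_upwards with ω
            exact Finset.prod_nonneg fun i _ => (Real.exp_pos _).le
        _ = M ^ t := hQ₀val
    -- conclude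
    rw [hsetEq, ← Eset_biUnion, hPsum]
    have hfin : (∑ τ ∈ Finset.range t, P (Eset X ρ σ t τ)) ≠ ⊤ := by
      refine ne_of_lt ?_
      calc ∑ τ ∈ Finset.range t, P (Eset X ρ σ t τ)
          ≤ ∑ τ ∈ Finset.range t, 1 := Finset.sum_le_sum fun τ _ => prob_le_one
        _ < ⊤ := by simp [lt_top_iff_ne_top]
    rw [ENNReal.le_ofReal_iff_toReal_le hfin (Real.exp_nonneg _),
      ENNReal.toReal_sum fun τ _ => measure_ne_top P _]
    have hchain : Real.exp (θ * σ) * M ^ t *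
        (∑ τ ∈ Finset.range t, (P (Eset X ρ σ t τ)).toReal) ≤ M ^ t := by
      rw [Finset.mul_sum]
      exact le_trans (Finset.sum_le_sum main) hsum
    have hMt : (0:ℝ) < M ^ t := pow_pos hMpos t
    have hS0 : 0 ≤ ∑ τ ∈ Finset.range t, (P (Eset X ρ σ t τ)).toReal :=
      Finset.sum_nonneg fun τ _ => ENNReal.toReal_nonneg
    have h1 : Real.exp (θ * σ) * (∑ τ ∈ Finset.range t, (P (Eset X ρ σ t τ)).toReal) ≤ 1 := by
      have h2 : (Real.exp (θ * σ) * ∑ τ ∈ Finset.range t, (P (Eset X ρ σ t τ)).toReal)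
          * M ^ t ≤ 1 * M ^ t := by
        rw [one_mul]
        calc (Real.exp (θ * σ) * ∑ τ ∈ Finset.range t, (P (Eset X ρ σ t τ)).toReal) * M ^ t
            = Real.exp (θ * σ) * M ^ t *
              (∑ τ ∈ Finset.range t, (P (Eset X ρ σ t τ)).toReal) := by ring
          _ ≤ M ^ t := hchain
      exact le_of_mul_le_mul_right h2 hMt
    rw [neg_mul, Real.exp_neg]
    rw [← one_div, le_div_iff₀ (Real.exp_pos _)]
    linarith
  refine ⟨key, ?_⟩
  intro ε hε t
  have hεpos : 0 < ε := hε.1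
  have hlog : Real.log ε ≤ 0 := Real.log_nonpos hεpos.le hε.2
  have hdiv : Real.log ε / θ ≤ 0 := div_nonpos_of_nonpos_of_nonneg hlog hθ.le
  rcases Nat.eq_zero_or_pos t with h0 | hpos
  · subst h0
    have huniv : {ω : Ω | ∀ τ ≤ 0,
        (∑ i ∈ Finset.Ico τ 0, X i ω)
          ≤ ρ * (((0 : ℕ) : ℝ) - (τ : ℝ)) - Real.log ε / θ} = Set.univ := by
      ext ω
      simp only [Set.mem_setOf_eq, Set.mem_univ, iff_true]
      intro τ hτ
      obtain rfl : τ = 0 := Nat.le_zero.1 hτ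
      simp only [Finset.Ico_self, Finset.sum_empty, Nat.cast_zero, sub_self, mul_zero,
        zero_sub]
      linarith
    rw [huniv, measure_univ]
    exact tsub_le_self
  · set σ : ℝ := -(Real.log ε / θ) with hσdef
    have hσ0 : 0 ≤ σ := by rw [hσdef]; linarith
    have hbad := key t hpos σ hσ0
    have hexpσ : Real.exp (-θ * σ) = ε := by
      have h1 : -θ * σ = Real.log ε := by
        rw [hσdef]
        field_simp
      rw [h1, Real.exp_log hεpos]
    rw [hexpσ] at hbad
    set Bad := {ω : Ω | ∃ τ ≤ t - 1,
        σ ≤ (∑ i ∈ Finset.Ico τ t, X i ω) - ρ * ((t : ℝ) - (τ : ℝ))} with hBad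
    have hBadMeas : MeasurableSet Bad := by
      have : Bad = ⋃ (τ : ℕ) (_ : τ ≤ t - 1),
          {ω : Ω | σ ≤ (∑ i ∈ Finset.Ico τ t, X i ω) - ρ * ((t : ℝ) - (τ : ℝ))} := by
        ext ω; simp [hBad]
      rw [this]
      exact MeasurableSet.iUnion fun τ => MeasurableSet.iUnion fun _ =>
        measurableSet_le measurable_const
          ((Finset.measurable_sum _ fun i _ => hmeas i).sub measurable_const)
    have hsub : Badᶜ ⊆ {ω : Ω | ∀ τ ≤ t,
        (∑ i ∈ Finset.Ico τ t, X i ω)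
          ≤ ρ * ((t : ℝ) - (τ : ℝ)) - Real.log ε / θ} := by
      intro ω hω τ hτ
      rcases eq_or_lt_of_le hτ with rfl | hlt
      · simp only [Finset.Ico_self, Finset.sum_empty, sub_self, mul_zero, zero_sub]
        linarith
      · have h1 : ¬ σ ≤ (∑ i ∈ Finset.Ico τ t, X i ω) - ρ * ((t : ℝ) - (τ : ℝ)) := by
          intro hcon
          exact hω ⟨τ, by omega, hcon⟩
        have h2 := lt_of_not_ge h1
        rw [hσdef] at h2
        linarith
    calc 1 - ENNReal.ofReal ε ≤ 1 - P Bad := tsub_le_tsub_left hbad 1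
      _ = P Badᶜ := (prob_compl_eq_one_sub hBadMeas).symm
      _ ≤ P _ := measure_mono hsub
end

section
/- (Bracketing of a super-additive service by burst-response estimates) Let S(τ,t) be a super-additive bivariate real-valued function defined for natural numbers 0 ≤ τ ≤ t with S(τ,τ) = 0 for all τ. Fix t ≥ 0 and define the minimal-probe estimate Ã(τ) = S(0,τ) and the departures D(t) = min over υ in [0,t] of { Ã(υ) + S(υ,t) }. Then for all τ ∈ [0,t]: D(t) − Ã(τ) ≤ S(τ,t) ≤ S(0,t) − S(0,τ), and the gap between the upper and lower estimates equals the maximal deviation from additivity, i.e., (S(0,t) − S(0,τ)) − (D(t) − Ã(τ)) = Δ(0,t) = S(0,t) − min over υ in [0,t] of { S(0,υ) + S(υ,t) }. Moreover Δ(0,t) equals the backlog B(t) = Ã(t) − D(t) at the end of the probe, and if S is additive then B(t) = 0 and both estimates recover S(τ,t) exactly. -/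
/-- Bracketing of a super-additive service by burst-response estimates: let `S` be
super-additive with `S(τ,τ) = 0`, fix `t`, let `Ã(τ) = S(0,τ)` be the minimal-probe
estimate and `D(t) = min over υ ∈ [0,t] of { Ã(υ) + S(υ,t) }`
`= min over υ ∈ [0,t] of { S(0,υ) + S(υ,t) }`. Then for all `τ ∈ [0,t]` the lower
estimate `D(t) - Ã(τ)` and the upper estimate `S(0,t) - S(0,τ)` bracket `S(τ,t)`;
the gap between them equals the maximal deviation from additivity
`Δ(0,t) = S(0,t) - min over υ ∈ [0,t] of { S(0,υ) + S(υ,t) }`, which (since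
`Ã(t) = S(0,t)`) is exactly the backlog `B(t) = Ã(t) - D(t)` at the end of the probe;
and if `S` is additive then `B(t) = 0` and both estimates recover `S(τ,t)` exactly. -/
theorem burst_response_bracketing (S : ℕ → ℕ → ℝ)
    (hsup : ∀ s t u : ℕ, s ≤ t → t ≤ u → S s t + S t u ≤ S s u)
    (hdiag : ∀ τ : ℕ, S τ τ = 0) (t : ℕ) :
    (∀ τ ≤ t,
      sInf ((fun υ => S 0 υ + S υ t) '' Set.Icc 0 t) - S 0 τ ≤ S τ t ∧
      S τ t ≤ S 0 t - S 0 τ) ∧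
    (∀ τ ≤ t,
      (S 0 t - S 0 τ) - (sInf ((fun υ => S 0 υ + S υ t) '' Set.Icc 0 t) - S 0 τ)
        = S 0 t - sInf ((fun υ => S 0 υ + S υ t) '' Set.Icc 0 t)) ∧
    ((∀ s u v : ℕ, s ≤ u → u ≤ v → S s v = S s u + S u v) →
      S 0 t - sInf ((fun υ => S 0 υ + S υ t) '' Set.Icc 0 t) = 0 ∧
      ∀ τ ≤ t,
        sInf ((fun υ => S 0 υ + S υ t) '' Set.Icc 0 t) - S 0 τ = S τ t ∧
        S 0 t - S 0 τ = S τ t) := by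
  set I := ((fun υ => S 0 υ + S υ t) '' Set.Icc 0 t) with hI
  have hfin : I.Finite := (Set.finite_Icc 0 t).image _
  have hbdd : BddBelow I := hfin.bddBelow
  have hle : ∀ τ ≤ t, sInf I ≤ S 0 τ + S τ t := by
    intro τ hτ
    exact csInf_le hbdd ⟨τ, ⟨Nat.zero_le _, hτ⟩, rfl⟩
  refine ⟨?_, ?_, ?_⟩
  · intro τ hτ
    constructor
    · linarith [hle τ hτ]
    · linarith [hsup 0 τ t (Nat.zero_le _) hτ]
  · intro τ hτ; ring
  · intro hadd
    have hIeq : I = {S 0 t} := by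
      apply Set.eq_singleton_iff_nonempty_unique_mem.2
      refine ⟨⟨S 0 0 + S 0 t, ⟨0, ⟨le_rfl, Nat.zero_le _⟩, rfl⟩⟩, ?_⟩
      rintro x ⟨υ, ⟨-, hυ⟩, rfl⟩
      exact (hadd 0 υ t (Nat.zero_le _) hυ).symm
    have hsInf : sInf I = S 0 t := by rw [hIeq, csInf_singleton]
    refine ⟨by rw [hsInf]; ring, ?_⟩
    intro τ hτ
    have := hadd 0 τ t (Nat.zero_le _) hτ
    refine ⟨?_, ?_⟩ <;> [rw [hsInf]; skip] <;> linarith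
end

section
/- (Sample-path accuracy of minimal probing) Let Ψ be a nonempty finite index set and for each ψ ∈ Ψ let S_ψ(τ,t) be a bivariate real-valued function defined for 0 ≤ τ ≤ t with S_ψ(τ,τ) = 0. Fix t ≥ 0 and define 𝒮(τ,t) = min over ψ in Ψ of { S_ψ(0,t) − S_ψ(0,τ) }. Then for every φ ∈ Ψ, the backlog of the probe A(τ,t) = 𝒮(τ,t) through the system with service S_φ satisfies B_φ(t) = max over τ in [0,t] of { 𝒮(τ,t) − S_φ(τ,t) } ≤ Δ_φ(0,t) = S_φ(0,t) − min over τ in [0,t] of { S_φ(0,τ) + S_φ(τ,t) }. In particular, if every S_φ is additive then B_φ(t) ≤ 0 for all φ ∈ Ψ. -/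
/-- Sample-path accuracy of minimal probing: let `Ψ` be a nonempty finite family of
sample paths `S_ψ(τ,t)` with `S_ψ(τ,τ) = 0`. Fix `t` and let
`𝒮(τ,t) = min over ψ ∈ Ψ of { S_ψ(0,t) - S_ψ(0,τ) }` be the burst-response estimate.
Then for every `φ ∈ Ψ` the backlog of the probe `A(τ,t) = 𝒮(τ,t)` through the system
with service `S_φ`, namely `B_φ(t) = max over τ ∈ [0,t] of { 𝒮(τ,t) - S_φ(τ,t) }`,
is bounded by the maximal deviation from additivity
`Δ_φ(0,t) = S_φ(0,t) - min over τ ∈ [0,t] of { S_φ(0,τ) + S_φ(τ,t) }`; in particular,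
if every `S_φ` is additive then `B_φ(t) ≤ 0` for all `φ ∈ Ψ`. -/
theorem minimal_probing_accuracy {ι : Type*} (Ψ : Finset ι) (hΨ : Ψ.Nonempty)
    (S : ι → ℕ → ℕ → ℝ) (hdiag : ∀ ψ ∈ Ψ, ∀ τ : ℕ, S ψ τ τ = 0) (t : ℕ) :
    (∀ φ ∈ Ψ,
      sSup ((fun τ => Ψ.inf' hΨ (fun ψ => S ψ 0 t - S ψ 0 τ) - S φ τ t) '' Set.Icc 0 t)
        ≤ S φ 0 t - sInf ((fun τ => S φ 0 τ + S φ τ t) '' Set.Icc 0 t)) ∧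
    ((∀ φ ∈ Ψ, ∀ s u v : ℕ, s ≤ u → u ≤ v → S φ s v = S φ s u + S φ u v) →
      ∀ φ ∈ Ψ,
        sSup ((fun τ => Ψ.inf' hΨ (fun ψ => S ψ 0 t - S ψ 0 τ) - S φ τ t) '' Set.Icc 0 t)
          ≤ 0) := by
  constructor
  · intro φ hφ
    apply csSup_le (Set.Nonempty.image _ ⟨0, by simp⟩)
    rintro x ⟨τ, hτ, rfl⟩
    have h1 : Ψ.inf' hΨ (fun ψ => S ψ 0 t - S ψ 0 τ) ≤ S φ 0 t - S φ 0 τ :=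
      Finset.inf'_le _ hφ
    have h2 : sInf ((fun τ => S φ 0 τ + S φ τ t) '' Set.Icc 0 t)
        ≤ S φ 0 τ + S φ τ t := by
      apply csInf_le ((Set.finite_Icc 0 t).image _).bddBelow
      exact ⟨τ, hτ, rfl⟩
    dsimp only
    linarith
  · intro hadd φ hφ
    apply csSup_le (Set.Nonempty.image _ ⟨0, by simp⟩)
    rintro x ⟨τ, hτ, rfl⟩
    have h1 : Ψ.inf' hΨ (fun ψ => S ψ 0 t - S ψ 0 τ) ≤ S φ 0 t - S φ 0 τ :=
      Finset.inf'_le _ hφ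
    have h2 : S φ 0 t = S φ 0 τ + S φ τ t :=
      hadd φ hφ 0 τ t (Nat.zero_le _) hτ.2
    dsimp only
    linarith
end

section
/- (Rate scanning estimate) Let (Ω, P) be a probability space, fix t ≥ 0, and let S(ω; τ,t) for 0 ≤ τ ≤ t be real-valued random variables. Let R be a finite set of rates, ξ ∈ (0,1], and for each r ∈ R let B_r(ω; t) = max over τ in [0,t] of { r(t−τ) − S(ω; τ,t) } be the backlog under the constant-rate probe A(τ) = rτ. Suppose for each r ∈ R a number b_r satisfies P[ B_r(t) ≤ b_r ] ≥ 1 − ξ (events assumed measurable). Then P[ S(τ,t) ≥ max over r in R of { r(t−τ) − b_r } for all τ ∈ [0,t] ] ≥ 1 − |R| ξ; i.e., 𝒮(τ,t) = max_{r∈R} { r(t−τ) − b_r } is a non-stationary service curve with violation probability ε = |R| ξ. -/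
open MeasureTheory ENNReal

/-- Rate scanning estimate: fix `t` and a random service process `S(ω;τ,t)`. Let `R` be
a finite (nonempty) set of rates and `ξ ∈ (0,1]`. For each `r ∈ R` the backlog under the
constant-rate probe is `B_r(ω;t) = max over τ ∈ [0,t] of { r(t-τ) - S(ω;τ,t) }`; assume
`P[ B_r(t) ≤ b_r ] ≥ 1 - ξ` for each `r ∈ R`. Then
`𝒮(τ,t) = max over r ∈ R of { r(t-τ) - b_r }` is a non-stationary service curve with
violation probability `|R| ξ`:
`P[ S(τ,t) ≥ 𝒮(τ,t) for all τ ∈ [0,t] ] ≥ 1 - |R| ξ`. -/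
theorem rate_scanning {Ω : Type*} [MeasurableSpace Ω]
    (P : Measure Ω) [IsProbabilityMeasure P]
    (t : ℕ) (S : Ω → ℕ → ℝ) (R : Finset ℝ) (hR : R.Nonempty)
    (ξ : ℝ) (hξ : ξ ∈ Set.Ioc (0 : ℝ) 1) (b : ℝ → ℝ)
    (hmeas : ∀ r ∈ R, MeasurableSet
      {ω : Ω | sSup ((fun τ : ℕ => r * ((t : ℝ) - (τ : ℝ)) - S ω τ) '' Set.Icc 0 t) ≤ b r})
    (hb : ∀ r ∈ R,
      P {ω : Ω | sSup ((fun τ : ℕ => r * ((t : ℝ) - (τ : ℝ)) - S ω τ) '' Set.Icc 0 t) ≤ b r}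
        ≥ 1 - ENNReal.ofReal ξ) :
    P {ω : Ω | ∀ τ ∈ Set.Icc 0 t,
        R.sup' hR (fun r => r * ((t : ℝ) - (τ : ℝ)) - b r) ≤ S ω τ}
      ≥ 1 - (R.card : ℝ≥0∞) * ENNReal.ofReal ξ := by
  set A : ℝ → Set Ω := fun r =>
    {ω : Ω | sSup ((fun τ : ℕ => r * ((t : ℝ) - (τ : ℝ)) - S ω τ) '' Set.Icc 0 t) ≤ b r}
    with hA
  -- the intersection of the good events is contained in the target event
  have hsub : (⋂ r ∈ R, A r) ⊆
      {ω : Ω | ∀ τ ∈ Set.Icc 0 t,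
        R.sup' hR (fun r => r * ((t : ℝ) - (τ : ℝ)) - b r) ≤ S ω τ} := by
    intro ω hω τ hτ
    apply Finset.sup'_le
    intro r hr
    have hωr : ω ∈ A r := Set.mem_iInter₂.mp hω r hr
    have hbdd : BddAbove ((fun τ : ℕ => r * ((t : ℝ) - (τ : ℝ)) - S ω τ) '' Set.Icc 0 t) :=
      ((Set.finite_Icc 0 t).image _).bddAbove
    have hmem : r * ((t : ℝ) - (τ : ℝ)) - S ω τ ∈
        ((fun τ : ℕ => r * ((t : ℝ) - (τ : ℝ)) - S ω τ) '' Set.Icc 0 t) :=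
      ⟨τ, hτ, rfl⟩
    have h1 : r * ((t : ℝ) - (τ : ℝ)) - S ω τ ≤ b r :=
      le_trans (le_csSup hbdd hmem) hωr
    linarith
  -- each complement has probability at most ξ
  have hcompl : ∀ r ∈ R, P (A r)ᶜ ≤ ENNReal.ofReal ξ := by
    intro r hr
    have h := measure_compl (hmeas r hr) (measure_ne_top P _)
    rw [h, measure_univ]
    have h1 : 1 ≤ ENNReal.ofReal ξ + P (A r) := by
      have hle : ENNReal.ofReal ξ ≤ 1 := by
        rw [← ENNReal.ofReal_one]
        exact ENNReal.ofReal_le_ofReal hξ.2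
      calc (1 : ℝ≥0∞) = ENNReal.ofReal ξ + (1 - ENNReal.ofReal ξ) := by
            rw [add_tsub_cancel_of_le hle]
        _ ≤ ENNReal.ofReal ξ + P (A r) := by
            exact add_le_add le_rfl (hb r hr)
    exact tsub_le_iff_left.mpr (show (1:ℝ≥0∞) ≤ P (A r) + ENNReal.ofReal ξ by rwa [add_comm] at h1)
  -- union bound
  have hunion : P (⋂ r ∈ R, A r)ᶜ ≤ (R.card : ℝ≥0∞) * ENNReal.ofReal ξ := by
    rw [Set.compl_iInter₂]
    calc P (⋃ r ∈ R, (A r)ᶜ) ≤ ∑ r ∈ R, P (A r)ᶜ := measure_biUnion_finset_le R _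
      _ ≤ ∑ _r ∈ R, ENNReal.ofReal ξ := Finset.sum_le_sum hcompl
      _ = (R.card : ℝ≥0∞) * ENNReal.ofReal ξ := by
          rw [Finset.sum_const, nsmul_eq_mul]
  -- conclude
  have h1 : (1 : ℝ≥0∞) ≤ P (⋂ r ∈ R, A r) + P (⋂ r ∈ R, A r)ᶜ := by
    have := measure_union_le (μ := P) (⋂ r ∈ R, A r) (⋂ r ∈ R, A r)ᶜ
    rwa [Set.union_compl_self, measure_univ] at this
  calc (1 : ℝ≥0∞) - (R.card : ℝ≥0∞) * ENNReal.ofReal ξ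
      ≤ 1 - P (⋂ r ∈ R, A r)ᶜ := tsub_le_tsub_left hunion 1
    _ ≤ P (⋂ r ∈ R, A r) := by
        exact tsub_le_iff_right.mpr h1
    _ ≤ _ := measure_mono hsub
end

section
/- (Additivity properties of latency-rate service processes) Let R > 0 and T ≥ 0 be natural numbers. (a) The transient latency-rate function S^tlr(τ,t) = R · max{ t − max{τ, T}, 0 } defined for 0 ≤ τ ≤ t is additive: S^tlr(s,u) = S^tlr(s,t) + S^tlr(t,u) for all s ≤ t ≤ u. (b) The stationary latency-rate function S^slr(τ,t) = R · max{ t − τ − T, 0 } is super-additive but, for T > 0, not additive; its maximal deviation from additivity satisfies Δ(τ,u) = S^slr(τ,u) − min over t in [τ,u] of { S^slr(τ,t) + S^slr(t,u) } = R·T whenever u ≥ τ + 2T. -/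
/-- Transient latency-rate function `S^tlr(τ,t) = R [t - max{τ,T}]₊`. -/
noncomputable def Stlr (R T : ℕ) : ℕ → ℕ → ℝ :=
  fun τ t => (R : ℝ) * max ((t : ℝ) - max (τ : ℝ) (T : ℝ)) 0

/-- Stationary latency-rate function `S^slr(τ,t) = R [t - τ - T]₊`. -/
noncomputable def Sslr (R T : ℕ) : ℕ → ℕ → ℝ :=
  fun τ t => (R : ℝ) * max ((t : ℝ) - (τ : ℝ) - (T : ℝ)) 0

/-- Additivity properties of latency-rate service processes: for `R > 0` and `T ≥ 0`,
(a) the transient latency-rate function `S^tlr` is additive;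
(b) the stationary latency-rate function `S^slr` is super-additive but, for `T > 0`,
not additive, and its maximal deviation from additivity satisfies
`Δ(τ,u) = S^slr(τ,u) - min over t ∈ [τ,u] of { S^slr(τ,t) + S^slr(t,u) } = R·T`
whenever `u ≥ τ + 2T`. -/
theorem latency_rate_additivity (R T : ℕ) (hR : 0 < R) :
    (∀ s t u : ℕ, s ≤ t → t ≤ u → Stlr R T s u = Stlr R T s t + Stlr R T t u) ∧
    (∀ s t u : ℕ, s ≤ t → t ≤ u → Sslr R T s t + Sslr R T t u ≤ Sslr R T s u) ∧
    (0 < T → ∃ s t u : ℕ, s ≤ t ∧ t ≤ u ∧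
      Sslr R T s u ≠ Sslr R T s t + Sslr R T t u) ∧
    (∀ τ u : ℕ, τ + 2 * T ≤ u →
      Sslr R T τ u - sInf ((fun t => Sslr R T τ t + Sslr R T t u) '' Set.Icc τ u)
        = (R : ℝ) * (T : ℝ)) := by
  have hT : (0:ℝ) ≤ T := Nat.cast_nonneg T
  have hR' : (0:ℝ) ≤ R := Nat.cast_nonneg R
  refine ⟨?_, ?_, ?_, ?_⟩
  · intro s t u hst htu
    have hst' : (s:ℝ) ≤ t := by exact_mod_cast hst
    have htu' : (t:ℝ) ≤ u := by exact_mod_cast htu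
    simp only [Stlr]
    rw [← mul_add]
    congr 1
    rcases le_total (t:ℝ) (max (s:ℝ) T) with h | h
    · have h1 : max ((t:ℝ) - max (s:ℝ) T) 0 = 0 := max_eq_right (by linarith)
      have h2 : max (t:ℝ) (T:ℝ) = max (s:ℝ) (T:ℝ) := by
        rcases max_cases (s:ℝ) (T:ℝ) with ⟨he, _⟩ | ⟨he, _⟩
        · have : (t:ℝ) = s := le_antisymm (he ▸ h) hst'
          rw [this]
        · rw [he] at h ⊢
          rw [max_eq_right h]
      rw [h1, h2]; ring
    · have h2 : max (t:ℝ) (T:ℝ) = t := max_eq_left (le_trans (le_max_right _ _) h)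
      have hmax : max (s:ℝ) (T:ℝ) ≤ t := h
      rw [h2, max_eq_left (by linarith : (0:ℝ) ≤ (u:ℝ) - max (s:ℝ) T),
        max_eq_left (by linarith : (0:ℝ) ≤ (t:ℝ) - max (s:ℝ) T),
        max_eq_left (by linarith : (0:ℝ) ≤ (u:ℝ) - t)]
      ring
  · intro s t u hst htu
    have hst' : (s:ℝ) ≤ t := by exact_mod_cast hst
    have htu' : (t:ℝ) ≤ u := by exact_mod_cast htu
    simp only [Sslr]
    rw [← mul_add]
    apply mul_le_mul_of_nonneg_left _ hR'
    rcases max_cases ((t:ℝ)-s-T) 0 with ⟨e1,f1⟩|⟨e1,f1⟩ <;>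
      rcases max_cases ((u:ℝ)-t-T) 0 with ⟨e2,f2⟩|⟨e2,f2⟩ <;>
      rcases max_cases ((u:ℝ)-s-T) 0 with ⟨e3,f3⟩|⟨e3,f3⟩ <;>
      rw [e1,e2,e3] <;> linarith
  · intro hTpos
    refine ⟨0, T, 2*T, Nat.zero_le _, by omega, ?_⟩
    have hT' : (0:ℝ) < T := by exact_mod_cast hTpos
    have hR2 : (0:ℝ) < R := by exact_mod_cast hR
    simp only [Sslr]
    push_cast
    rw [show (2*(T:ℝ) - 0 - T) = T by ring, show ((T:ℝ) - 0 - T) = 0 by ring,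
      show (2*(T:ℝ) - T - T) = 0 by ring, max_eq_left hT, max_self]
    simp only [mul_zero, add_zero, zero_add]
    exact ne_of_gt (by positivity)
  · intro τ u hu
    have hu' : (τ:ℝ) + 2*T ≤ u := by exact_mod_cast hu
    have key : sInf ((fun t => Sslr R T τ t + Sslr R T t u) '' Set.Icc τ u)
        = (R:ℝ) * ((u:ℝ) - τ - 2*T) := by
      have hlb : ∀ x ∈ ((fun t => Sslr R T τ t + Sslr R T t u) '' Set.Icc τ u),
          (R:ℝ) * ((u:ℝ) - τ - 2*T) ≤ x := by
        rintro x ⟨t, _, rfl⟩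
        simp only [Sslr]
        rw [← mul_add]
        apply mul_le_mul_of_nonneg_left _ hR'
        have h1 : (t:ℝ) - τ - T ≤ max ((t:ℝ) - τ - T) 0 := le_max_left _ _
        have h2 : (u:ℝ) - t - T ≤ max ((u:ℝ) - t - T) 0 := le_max_left _ _
        linarith
      have hmem : (R:ℝ) * ((u:ℝ) - τ - 2*T)
          ∈ ((fun t => Sslr R T τ t + Sslr R T t u) '' Set.Icc τ u) := by
        refine ⟨τ + T, ⟨by omega, by omega⟩, ?_⟩
        simp only [Sslr]
        push_cast
        rw [show ((τ:ℝ) + T - τ - T) = 0 by ring, max_self,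
          max_eq_left (by linarith : (0:ℝ) ≤ (u:ℝ) - ((τ:ℝ) + T) - T)]
        ring_nf
      exact le_antisymm (csInf_le ⟨_, hlb⟩ hmem) (le_csInf ⟨_, hmem⟩ hlb)
    rw [key]
    simp only [Sslr]
    rw [max_eq_left (by linarith : (0:ℝ) ≤ (u:ℝ) - τ - T)]
    ring
end
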